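/- arXiv:1303.1208 — 3 statements merged into one kernel-verified Lean document; each statement's English description precedes it below -/
import Mathlib

section
/- Let π̃₀, π̃₁ ∈ [0,1) and let P₀, P₁, P̃₀, P̃₁ be probability measures with P̃₀ ≠ P̃₁ satisfying P̃₀ = (1-π̃₀)P₀ + π̃₀P̃₁ and P̃₁ = (1-π̃₁)P₁ + π̃₁P̃₀. Then P₀ ≠ P₁, and setting π₀ = π̃₀(1-π̃₁)/(1-π̃₀π̃₁) and π₁ = π̃₁(1-π̃₀)/(1-π̃₀π̃₁), one has π₀ + π₁ < 1, P̃₀ = (1-π₀)P₀ + π₀P₁, and P̃₁ = (1-π₁)P₁ + π₁P₀. These π₀, π₁ are the unique values in [0,1) for which the last two identities hold. -/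
open MeasureTheory

/-- The mixture `(1-a)·P + a·Q` of two measures. -/
noncomputable def mix {X : Type*} [MeasurableSpace X] (a : ℝ) (P Q : Measure X) :
    Measure X :=
  ENNReal.ofReal (1 - a) • P + ENNReal.ofReal a • Q

/-- `G` is irreducible with respect to `H`: no decomposition `G = γ·H + (1-γ)·F'`
with `F'` a probability measure and `0 < γ ≤ 1`. -/
def Irred {X : Type*} [MeasurableSpace X] (G H : Measure X) : Prop :=
  ¬ ∃ (γ : ℝ) (F' : Measure X), IsProbabilityMeasure F' ∧ 0 < γ ∧ γ ≤ 1 ∧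
      G = mix γ F' H

/-- Mutual irreducibility. -/
def MutIrred {X : Type*} [MeasurableSpace X] (P Q : Measure X) : Prop :=
  Irred P Q ∧ Irred Q P

/-- The set of feasible mixture proportions of `H` in `F`. -/
def nuSet {X : Type*} [MeasurableSpace X] (F H : Measure X) : Set ℝ :=
  {α | α ∈ Set.Icc (0:ℝ) 1 ∧
    ∃ G' : Measure X, IsProbabilityMeasure G' ∧ F = mix α G' H}

/-- `ν*(F,H)`: the maximal proportion of `H` in `F`. -/
noncomputable def nuStar {X : Type*} [MeasurableSpace X] (F H : Measure X) : ℝ :=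
  sSup (nuSet F H)

/-
Evaluated on a measurable set, the two mixture identities form a linear system
`x₀ = (1-π̃₀) p₀ + π̃₀ x₁`, `x₁ = (1-π̃₁) p₁ + π̃₁ x₀`, whose determinant `1 - π̃₀π̃₁` is positive;
solving it for `x₀` and `x₁` gives the decoupled identities. If `P₀ = P₁`, both identities would
collapse to `P̃₀ = P₀ = P̃₁`. Uniqueness holds because `a ↦ (1-a)P + aQ` is injective when
`P ≠ Q`.
-/

section

variable {X : Type*} [MeasurableSpace X]

lemma MeasureTheory.Measure.ext_of_measureReal {μ ν : Measure X}
    [IsFiniteMeasure μ] [IsFiniteMeasure ν]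
    (h : ∀ s, MeasurableSet s → μ.real s = ν.real s) : μ = ν :=
  Measure.ext fun s hs => (measureReal_eq_measureReal_iff ..).1 (h s hs)

instance (a : ℝ) (P Q : Measure X) [IsFiniteMeasure P] [IsFiniteMeasure Q] :
    IsFiniteMeasure (mix a P Q) :=
  have := P.smul_finite (ENNReal.ofReal_ne_top (r := 1 - a))
  have := Q.smul_finite (ENNReal.ofReal_ne_top (r := a))
  inferInstanceAs (IsFiniteMeasure (_ + _))

lemma mix_real_apply {a : ℝ} (ha : a ∈ Set.Icc (0 : ℝ) 1) (P Q : Measure X)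
    [IsFiniteMeasure P] [IsFiniteMeasure Q] (s : Set X) :
    (mix a P Q).real s = (1 - a) * P.real s + a * Q.real s := by
  have := P.smul_finite (ENNReal.ofReal_ne_top (r := 1 - a))
  have := Q.smul_finite (ENNReal.ofReal_ne_top (r := a))
  rw [mix, measureReal_add_apply, measureReal_ennreal_smul_apply,
    measureReal_ennreal_smul_apply, ENNReal.toReal_ofReal (by linarith [ha.2]),
    ENNReal.toReal_ofReal ha.1]

lemma mix_self {a : ℝ} (ha : a ∈ Set.Icc (0 : ℝ) 1) (P : Measure X) : mix a P P = P := by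
  rw [mix, ← add_smul, ← ENNReal.ofReal_add (by linarith [ha.2]) ha.1]
  norm_num

lemma mix_injOn {P Q : Measure X} [IsFiniteMeasure P] [IsFiniteMeasure Q] (hPQ : P ≠ Q) :
    Set.InjOn (fun a => mix a P Q) (Set.Icc 0 1) := by
  intro a ha c hc h
  by_contra hac
  refine hPQ (Measure.ext_of_measureReal fun s _ => ?_)
  have hA := congrArg (fun μ : Measure X => μ.real s) h
  simp only [mix_real_apply ha, mix_real_apply hc] at hA
  have : (a - c) * (Q.real s - P.real s) = 0 := by linear_combination hA
  exact (sub_eq_zero.1 ((mul_eq_zero.1 this).resolve_left (sub_ne_zero.2 hac))).symm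

lemma decoupled_weight_mem_Icc {s t : ℝ} (hs : s ∈ Set.Ico (0 : ℝ) 1)
    (ht : t ∈ Set.Icc (0 : ℝ) 1) : s * (1 - t) / (1 - s * t) ∈ Set.Icc (0 : ℝ) 1 := by
  obtain ⟨hs₀, hs₁⟩ := hs
  obtain ⟨ht₀, ht₁⟩ := ht
  have hd : 0 < 1 - s * t := by nlinarith
  exact ⟨div_nonneg (by nlinarith) hd.le, (div_le_one hd).2 (by nlinarith)⟩

lemma decoupled_weights_add_lt_one {s t : ℝ} (hs : s ∈ Set.Ico (0 : ℝ) 1)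
    (ht : t ∈ Set.Ico (0 : ℝ) 1) :
    s * (1 - t) / (1 - s * t) + t * (1 - s) / (1 - s * t) < 1 := by
  obtain ⟨hs₀, hs₁⟩ := hs
  obtain ⟨ht₀, ht₁⟩ := ht
  rw [← add_div, div_lt_one (by nlinarith)]
  nlinarith

lemma eq_mix_of_eq_mix_of_eq_mix {s t : ℝ} (hs : s ∈ Set.Ico (0 : ℝ) 1)
    (ht : t ∈ Set.Icc (0 : ℝ) 1) {P₀ P₁ Q₀ Q₁ : Measure X}
    [IsFiniteMeasure P₀] [IsFiniteMeasure P₁] [IsFiniteMeasure Q₀] [IsFiniteMeasure Q₁]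
    (h₀ : Q₀ = mix s P₀ Q₁) (h₁ : Q₁ = mix t P₁ Q₀) :
    Q₀ = mix (s * (1 - t) / (1 - s * t)) P₀ P₁ := by
  have hd : 1 - s * t ≠ 0 := by nlinarith [hs.1, hs.2, ht.1, ht.2]
  refine Measure.ext_of_measureReal fun A _ => ?_
  have e₀ := congrArg (fun μ : Measure X => μ.real A) h₀
  have e₁ := congrArg (fun μ : Measure X => μ.real A) h₁
  simp only [mix_real_apply (Set.Ico_subset_Icc_self hs), mix_real_apply ht] at e₀ e₁
  rw [mix_real_apply (decoupled_weight_mem_Icc hs ht)]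
  field_simp
  linear_combination e₀ + s * e₁

end

theorem decoupled_converse {X : Type*} [MeasurableSpace X] (πt₀ πt₁ : ℝ)
    (hπt₀ : πt₀ ∈ Set.Ico (0:ℝ) 1) (hπt₁ : πt₁ ∈ Set.Ico (0:ℝ) 1)
    (P₀ P₁ Pt₀ Pt₁ : Measure X)
    [IsProbabilityMeasure P₀] [IsProbabilityMeasure P₁]
    [IsProbabilityMeasure Pt₀] [IsProbabilityMeasure Pt₁]
    (hne : Pt₀ ≠ Pt₁)
    (hPt₀ : Pt₀ = mix πt₀ P₀ Pt₁) (hPt₁ : Pt₁ = mix πt₁ P₁ Pt₀) :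
    P₀ ≠ P₁ ∧
    (πt₀ * (1 - πt₁) / (1 - πt₀ * πt₁)) + (πt₁ * (1 - πt₀) / (1 - πt₀ * πt₁)) < 1 ∧
    Pt₀ = mix (πt₀ * (1 - πt₁) / (1 - πt₀ * πt₁)) P₀ P₁ ∧
    Pt₁ = mix (πt₁ * (1 - πt₀) / (1 - πt₀ * πt₁)) P₁ P₀ ∧
    ∀ a b : ℝ, a ∈ Set.Ico (0:ℝ) 1 → b ∈ Set.Ico (0:ℝ) 1 →
      Pt₀ = mix a P₀ P₁ → Pt₁ = mix b P₁ P₀ →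
      a = πt₀ * (1 - πt₁) / (1 - πt₀ * πt₁) ∧
      b = πt₁ * (1 - πt₀) / (1 - πt₀ * πt₁) := by
  have hw₀ := decoupled_weight_mem_Icc hπt₀ (Set.Ico_subset_Icc_self hπt₁)
  have hw₁ : πt₁ * (1 - πt₀) / (1 - πt₀ * πt₁) ∈ Set.Icc (0 : ℝ) 1 := by
    rw [mul_comm πt₀]
    exact decoupled_weight_mem_Icc hπt₁ (Set.Ico_subset_Icc_self hπt₀)
  have hmix₀ := eq_mix_of_eq_mix_of_eq_mix hπt₀ (Set.Ico_subset_Icc_self hπt₁) hPt₀ hPt₁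
  have hmix₁ : Pt₁ = mix (πt₁ * (1 - πt₀) / (1 - πt₀ * πt₁)) P₁ P₀ := by
    rw [mul_comm πt₀]
    exact eq_mix_of_eq_mix_of_eq_mix hπt₁ (Set.Ico_subset_Icc_self hπt₀) hPt₁ hPt₀
  have hP : P₀ ≠ P₁ := by
    rintro rfl
    exact hne (by rw [hmix₀, hmix₁, mix_self hw₀, mix_self hw₁])
  refine ⟨hP, decoupled_weights_add_lt_one hπt₀ hπt₁, hmix₀, hmix₁, fun a b ha hb ha' hb' => ?_⟩
  exact ⟨mix_injOn hP (Set.Ico_subset_Icc_self ha) hw₀ (ha'.symm.trans hmix₀),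
    mix_injOn hP.symm (Set.Ico_subset_Icc_self hb) hw₁ (hb'.symm.trans hmix₁)⟩
end

section
/- Let F, G, H be probability measures and γ ∈ [0,1] with F = (1-γ)G + γH. If G is irreducible with respect to H, then γ = ν*(F,H). -/
open MeasureTheory

/-!
If `F = mix α G' H` with `α > γ`, subtracting `γ·H` from both decompositions of `F` leaves
`(1-γ)·G = (1-α)·G' + (α-γ)·H`, i.e. `G = mix ((α-γ)/(1-γ)) G' H`, which irreducibility
of `G` with respect to `H` forbids. So `γ` is the largest feasible proportion.
-/

section Mixture

variable {X : Type*} [MeasurableSpace X]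

lemma mix_apply (a : ℝ) (P Q : Measure X) (s : Set X) :
    mix a P Q s = ENNReal.ofReal (1 - a) * P s + ENNReal.ofReal a * Q s := by
  simp only [mix, Measure.add_apply, Measure.smul_apply, smul_eq_mul]

lemma eq_mix_of_mix_eq_mix {G G' H : Measure X} [IsFiniteMeasure H] {γ α : ℝ}
    (hγ : 0 ≤ γ) (hγα : γ < α) (hα : α ≤ 1) (h : mix γ G H = mix α G' H) :
    G = mix ((α - γ) / (1 - γ)) G' H := by
  have h1γ : 0 < 1 - γ := by linarith
  have hG_coef : (1 - γ) * (1 - (α - γ) / (1 - γ)) = 1 - α := by field_simp; ring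
  have hH_coef : (1 - γ) * ((α - γ) / (1 - γ)) = α - γ := by field_simp
  ext s -
  have hs := congrArg (· s) h
  simp only [mix_apply] at hs
  have hγH : ENNReal.ofReal γ * H s ≠ ⊤ :=
    ENNReal.mul_ne_top ENNReal.ofReal_ne_top (measure_ne_top H s)
  have hpeeled : ENNReal.ofReal (1 - γ) * G s
      = ENNReal.ofReal (1 - α) * G' s + ENNReal.ofReal (α - γ) * H s := by
    rw [← ENNReal.add_left_inj hγH, hs, add_assoc, ← add_mul,
      ← ENNReal.ofReal_add (by linarith) hγ, sub_add_cancel]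
  have hscaled : ENNReal.ofReal (1 - γ) * mix ((α - γ) / (1 - γ)) G' H s
      = ENNReal.ofReal (1 - α) * G' s + ENNReal.ofReal (α - γ) * H s := by
    rw [mix_apply, mul_add, ← mul_assoc, ← mul_assoc, ← ENNReal.ofReal_mul h1γ.le,
      ← ENNReal.ofReal_mul h1γ.le, hG_coef, hH_coef]
  exact (ENNReal.mul_right_inj (ENNReal.ofReal_pos.2 h1γ).ne' ENNReal.ofReal_ne_top).1
    (hpeeled.trans hscaled.symm)

lemma le_of_mem_nuSet_of_irred {F G H : Measure X} [IsFiniteMeasure H] {γ α : ℝ}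
    (hγ : 0 ≤ γ) (hmix : F = mix γ G H) (hirr : Irred G H) (hα : α ∈ nuSet F H) :
    α ≤ γ := by
  obtain ⟨⟨-, hα1⟩, G', hG', hF⟩ := hα
  by_contra! hγα
  have h1γ : 0 < 1 - γ := by linarith
  exact hirr ⟨(α - γ) / (1 - γ), G', hG', div_pos (by linarith) h1γ,
    (div_le_one h1γ).2 (by linarith), eq_mix_of_mix_eq_mix hγ hγα hα1 (hmix.symm.trans hF)⟩

end Mixture

theorem irreducible_component_gives_nuStar_general {X : Type*} [MeasurableSpace X]
    (F G H : Measure X)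
    [IsProbabilityMeasure G] [IsProbabilityMeasure H]
    (γ : ℝ) (hγ : γ ∈ Set.Icc (0:ℝ) 1)
    (hmix : F = mix γ G H) (hirr : Irred G H) :
    γ = nuStar F H := by
  have hmem : γ ∈ nuSet F H := ⟨hγ, G, inferInstance, hmix⟩
  have hgreatest : IsGreatest (nuSet F H) γ :=
    ⟨hmem, fun _ hα => le_of_mem_nuSet_of_irred hγ.1 hmix hirr hα⟩
  exact hgreatest.csSup_eq.symm

theorem irreducible_component_gives_nuStar {X : Type*} [MeasurableSpace X]
    (F G H : Measure X)
    [IsProbabilityMeasure F] [IsProbabilityMeasure G] [IsProbabilityMeasure H]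
    (γ : ℝ) (hγ : γ ∈ Set.Icc (0:ℝ) 1)
    (hmix : F = mix γ G H) (hirr : Irred G H) :
    γ = nuStar F H :=
  irreducible_component_gives_nuStar_general F G H γ hγ hmix hirr
end

section
/- For any probability measures F and H on a measurable space (X, 𝔖), ν*(F,H) = inf over all measurable sets A with H(A) > 0 of F(A)/H(A). -/
open MeasureTheory

/-! The decomposition `F = (1-α)G' + αH` with `G'` a probability measure exists exactly when
`αH ≤ F` (take `G'` the normalisation of `F - αH`, whose mass is `1 - α`), and `αH ≤ F` says that
`α` is a lower bound of the ratios `F(A)/H(A)`. Since the ratio at `A = X` is `1`, the feasible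
proportions form the interval `[0, inf_A F(A)/H(A)]`. -/

section

variable {X : Type*} [MeasurableSpace X]

lemma MeasureTheory.Measure.exists_isProbabilityMeasure_smul_eq (ν : Measure X)
    [IsProbabilityMeasure ν] (μ : Measure X) [IsFiniteMeasure μ] :
    ∃ G : Measure X, IsProbabilityMeasure G ∧ μ = μ Set.univ • G := by
  rcases eq_zero_or_neZero μ with rfl | _
  · exact ⟨ν, inferInstance, by simp⟩
  · refine ⟨(μ Set.univ)⁻¹ • μ, inferInstance, ?_⟩
    rw [smul_smul, ENNReal.mul_inv_cancel (NeZero.ne _) (measure_ne_top _ _), one_smul]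

lemma smul_le_mix (a : ℝ) (G H : Measure X) : ENNReal.ofReal a • H ≤ mix a G H :=
  Measure.le_add_left le_rfl

lemma exists_mix_eq_of_smul_le {F H : Measure X} [IsProbabilityMeasure F]
    [IsProbabilityMeasure H] {a : ℝ} (ha : 0 ≤ a) (h : ENNReal.ofReal a • H ≤ F) :
    ∃ G : Measure X, IsProbabilityMeasure G ∧ F = mix a G H := by
  have := H.smul_finite (ENNReal.ofReal_ne_top (r := a))
  obtain ⟨G, hG, hFG⟩ := Measure.exists_isProbabilityMeasure_smul_eq F (F - ENNReal.ofReal a • H)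
  refine ⟨G, hG, ?_⟩
  have hmass : (F - ENNReal.ofReal a • H) Set.univ = ENNReal.ofReal (1 - a) := by
    rw [Measure.sub_apply .univ h, Measure.smul_apply, smul_eq_mul, measure_univ, measure_univ,
      mul_one, ENNReal.ofReal_sub _ ha, ENNReal.ofReal_one]
  rw [mix, ← hmass, ← hFG, Measure.sub_add_cancel_of_le h]

lemma mem_nuSet_iff {F H : Measure X} [IsProbabilityMeasure F] [IsProbabilityMeasure H]
    {a : ℝ} : a ∈ nuSet F H ↔ a ∈ Set.Icc 0 1 ∧ ENNReal.ofReal a • H ≤ F := by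
  refine and_congr_right fun ha => ⟨?_, exists_mix_eq_of_smul_le ha.1⟩
  rintro ⟨G, -, rfl⟩
  exact smul_le_mix a G H

lemma ENNReal.ofReal_mul_le_iff_le_div_toReal {a : ℝ} {x y : ENNReal} (ha : 0 ≤ a)
    (hx : x ≠ ⊤) (hy₀ : y ≠ 0) (hy : y ≠ ⊤) :
    ENNReal.ofReal a * y ≤ x ↔ a ≤ x.toReal / y.toReal := by
  rw [le_div_iff₀ (ENNReal.toReal_pos hy₀ hy), ← ENNReal.ofReal_le_iff_le_toReal hx,
    ENNReal.ofReal_mul ha, ENNReal.ofReal_toReal hy]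

lemma smul_le_iff_forall_le_div {F H : Measure X} [IsFiniteMeasure F] [IsFiniteMeasure H]
    {a : ℝ} (ha : 0 ≤ a) :
    ENNReal.ofReal a • H ≤ F ↔
      ∀ A, MeasurableSet A → 0 < H A → a ≤ (F A).toReal / (H A).toReal := by
  rw [Measure.le_iff]
  refine forall₂_congr fun A _ => ?_
  rw [Measure.smul_apply, smul_eq_mul]
  rcases eq_zero_or_pos (H A) with hA | hA
  · simp [hA]
  · simp only [hA, true_imp_iff]
    exact ENNReal.ofReal_mul_le_iff_le_div_toReal ha (measure_ne_top _ _) hA.ne'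
      (measure_ne_top _ _)

end

theorem nuStar_eq_inf_ratio {X : Type*} [MeasurableSpace X]
    (F H : Measure X) [IsProbabilityMeasure F] [IsProbabilityMeasure H] :
    nuStar F H =
      sInf {r : ℝ | ∃ A : Set X, MeasurableSet A ∧ 0 < H A ∧
        r = (F A).toReal / (H A).toReal} := by
  set R := {r : ℝ | ∃ A : Set X, MeasurableSet A ∧ 0 < H A ∧
    r = (F A).toReal / (H A).toReal}
  have one_mem : (1 : ℝ) ∈ R := ⟨Set.univ, .univ, by simp, by simp⟩
  have zero_mem_lowerBounds : (0 : ℝ) ∈ lowerBounds R := by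
    rintro _ ⟨A, -, -, rfl⟩
    positivity
  have hnu : nuSet F H = Set.Ici 0 ∩ lowerBounds R := by
    ext a
    rw [mem_nuSet_iff]
    refine ⟨fun ⟨ha, hle⟩ => ⟨ha.1, ?_⟩, fun ⟨ha, hlb⟩ => ⟨⟨ha, hlb one_mem⟩, ?_⟩⟩
    · rintro _ ⟨A, hA, hHA, rfl⟩
      exact (smul_le_iff_forall_le_div ha.1).1 hle A hA hHA
    · exact (smul_le_iff_forall_le_div ha).2 fun A hA hHA => hlb ⟨A, hA, hHA, rfl⟩
  rw [nuStar, hnu, (isGLB_csInf ⟨1, one_mem⟩ ⟨0, zero_mem_lowerBounds⟩).lowerBounds_eq, Set.Ici_inter_Iic,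
    csSup_Icc (le_csInf ⟨1, one_mem⟩ zero_mem_lowerBounds)]
end
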